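/- arXiv:1411.5923 — 2 statements merged into one kernel-verified Lean document; each statement's English description precedes it below -/
import Mathlib

section
/- Suppose the switched Markov jump linear system (𝒢,Π,Ψ) is uniformly exponentially mean square stable with constants c ≥ 1 and 0 ≤ λ < 1, and let M ∈ ℕ₀ satisfy c λ^{M+2} < 1. For each ψ ∈ Ψ define Y_ψ(i,k) := Σ_{j=k}^{k+M+1} G_ψ(i,k,j). Then for all i ∈ 𝒩 and all k ∈ ℕ₀: (a) I ≤ Y_ψ(i,k) ≤ (c/(1−λ)) I, and (b) A(i)ᵀ Ỹ_ψ(i,k+1) A(i) − Y_ψ(i,k) ≤ −(1 − c λ^{M+2}) I, where Ỹ_ψ(i,k+1) := Σ_{j=1}^{N} π_{ij}(ψ(k+1)) Y_ψ(j,k+1). -/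
open Matrix
open scoped Classical

noncomputable section

namespace SMJLS

/-- The ordered product `Φ = A(t(d−1)) ⋯ A(t 1) A(t 0)` along a tuple of modes. -/
def pathProd {n N : ℕ} (Am : Fin N → Matrix (Fin n) (Fin n) ℝ) {d : ℕ}
    (t : Fin d → Fin N) : Matrix (Fin n) (Fin n) ℝ :=
  (((List.finRange d).reverse).map fun l => Am (t l)).prod

/-- `Gmat Am Pm ψ i j k` is `E[Φ(k,j)ᵀ Φ(k,j) ∣ θ(j) = i]`, written as the explicit sum over
tuples `(i_j, …, i_{k−1}) ∈ 𝒩^{k−j}` with `i_j = i` of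
`(∏_{l=j+1}^{k−1} π_{i_{l−1} i_l}(ψ(l))) • ΦᵀΦ` where `Φ = A(i_{k−1}) ⋯ A(i_j)`;
by convention it is `I` when `k = j`. -/
def Gmat {n N J : ℕ} (Am : Fin N → Matrix (Fin n) (Fin n) ℝ)
    (Pm : Fin J → Matrix (Fin N) (Fin N) ℝ) (ψ : ℕ → Fin J) (i : Fin N) (j k : ℕ) :
    Matrix (Fin n) (Fin n) ℝ :=
  if k ≤ j then 1
  else
    ∑ t : Fin (k - j - 1 + 1) → Fin N,
      (if t 0 = i then
          ∏ l : Fin (k - j - 1), Pm (ψ (j + (l : ℕ) + 1)) (t l.castSucc) (t l.succ)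
        else 0) • ((pathProd Am t)ᵀ * pathProd Am t)

/-- Exponential mean square stability (of a single switching sequence) with
explicit constants `c` and `lam`:  `G_ψ(i,j,k) ≤ c λ^(k−j) I` in the Loewner order. -/
def EMSSWith {n N J : ℕ} (Am : Fin N → Matrix (Fin n) (Fin n) ℝ)
    (Pm : Fin J → Matrix (Fin N) (Fin N) ℝ) (c lam : ℝ) (ψ : ℕ → Fin J) : Prop :=
  ∀ (i : Fin N) (j k : ℕ), j ≤ k →
    ((c * lam ^ (k - j)) • (1 : Matrix (Fin n) (Fin n) ℝ) - Gmat Am Pm ψ i j k).PosSemidef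

/-- Uniform exponential mean square stability of the switched Markov jump linear system. -/
def UEMSS {n N J : ℕ} (Am : Fin N → Matrix (Fin n) (Fin n) ℝ)
    (Pm : Fin J → Matrix (Fin N) (Fin N) ℝ) (Ψ : Set (ℕ → Fin J)) : Prop :=
  ∃ c lam : ℝ, 1 ≤ c ∧ 0 ≤ lam ∧ lam < 1 ∧ ∀ ψ ∈ Ψ, EMSSWith Am Pm c lam ψ

/-- Probability of the cylinder `{θ(0) = path 0, …, θ(k) = path k}`. -/
def weight {N J : ℕ} (Pm : Fin J → Matrix (Fin N) (Fin N) ℝ) (ψ : ℕ → Fin J)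
    (p0 : Fin N → ℝ) (k : ℕ) (path : Fin (k + 1) → Fin N) : ℝ :=
  p0 (path 0) * ∏ l : Fin k, Pm (ψ ((l : ℕ) + 1)) (path l.castSucc) (path l.succ)

/-- Expectation of a functional `g` of the chain which depends only on `θ(0), …, θ(k)`. -/
def pexp {N J : ℕ} (Pm : Fin J → Matrix (Fin N) (Fin N) ℝ) (ψ : ℕ → Fin J)
    (p0 : Fin N → ℝ) (k : ℕ) (g : (ℕ → Fin N) → ℝ) : ℝ :=
  ∑ path : Fin (k + 1) → Fin N,
    weight Pm ψ p0 k path *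
      g (fun l => path ⟨min l k, Nat.lt_succ_of_le (min_le_right l k)⟩)

/-- A disturbance process is adapted when `w(k)` is measurable with respect to
`σ(θ(0),…,θ(k))`, i.e. `w(k)` is a function of the first `k+1` modes. -/
def Adapted {N m : ℕ} (w : ℕ → (ℕ → Fin N) → Fin m → ℝ) : Prop :=
  ∀ (k : ℕ) (ω ω' : ℕ → Fin N), (∀ l, l ≤ k → ω l = ω' l) → w k ω = w k ω'

/-- State trajectory: `x(k+1) = A(θ(k)) x(k) + B(θ(k)) w(k)`, `x(0) = x0`. -/
def traj {n m N : ℕ} (Am : Fin N → Matrix (Fin n) (Fin n) ℝ)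
    (Bm : Fin N → Matrix (Fin n) (Fin m) ℝ) (x0 : (ℕ → Fin N) → Fin n → ℝ)
    (w : ℕ → (ℕ → Fin N) → Fin m → ℝ) : ℕ → (ℕ → Fin N) → Fin n → ℝ
  | 0, ω => x0 ω
  | k + 1, ω => (Am (ω k)).mulVec (traj Am Bm x0 w k ω) + (Bm (ω k)).mulVec (w k ω)

/-- Error trajectory: `z(k) = C(θ(k)) x(k) + D(θ(k)) w(k)`. -/
def errv {n m p N : ℕ} (Am : Fin N → Matrix (Fin n) (Fin n) ℝ)
    (Bm : Fin N → Matrix (Fin n) (Fin m) ℝ) (Cm : Fin N → Matrix (Fin p) (Fin n) ℝ)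
    (Dm : Fin N → Matrix (Fin p) (Fin m) ℝ) (x0 : (ℕ → Fin N) → Fin n → ℝ)
    (w : ℕ → (ℕ → Fin N) → Fin m → ℝ) (k : ℕ) (ω : ℕ → Fin N) : Fin p → ℝ :=
  (Cm (ω k)).mulVec (traj Am Bm x0 w k ω) + (Dm (ω k)).mulVec (w k ω)

/-- `E[‖v(k)‖²]` for an adapted process `v`. -/
def energy {N J d : ℕ} (Pm : Fin J → Matrix (Fin N) (Fin N) ℝ) (ψ : ℕ → Fin J)
    (p0 : Fin N → ℝ) (v : ℕ → (ℕ → Fin N) → Fin d → ℝ) (k : ℕ) : ℝ :=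
  pexp Pm ψ p0 k (fun ω => v k ω ⬝ᵥ v k ω)

/-- Mean square strict contractiveness with constant `γ` for the single switching
sequence `ψ` : whenever `x(0) = 0`, `‖z‖_{2,e} ≤ γ ‖w‖_{2,e}` for every admissible `w`. -/
def ContractiveWith {n m p N J : ℕ} (Am : Fin N → Matrix (Fin n) (Fin n) ℝ)
    (Bm : Fin N → Matrix (Fin n) (Fin m) ℝ) (Cm : Fin N → Matrix (Fin p) (Fin n) ℝ)
    (Dm : Fin N → Matrix (Fin p) (Fin m) ℝ) (Pm : Fin J → Matrix (Fin N) (Fin N) ℝ)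
    (γ : ℝ) (ψ : ℕ → Fin J) (p0 : Fin N → ℝ) : Prop :=
  ∀ w : ℕ → (ℕ → Fin N) → Fin m → ℝ, Adapted w →
    Summable (fun k => energy Pm ψ p0 w k) →
    Summable (fun k => energy Pm ψ p0 (errv Am Bm Cm Dm (fun _ => 0) w) k) ∧
      ∑' k, energy Pm ψ p0 (errv Am Bm Cm Dm (fun _ => 0) w) k ≤
        γ ^ 2 * ∑' k, energy Pm ψ p0 w k

/-- Uniform mean square strict contractiveness of the switched system. -/
def UMSSC {n m p N J : ℕ} (Am : Fin N → Matrix (Fin n) (Fin n) ℝ)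
    (Bm : Fin N → Matrix (Fin n) (Fin m) ℝ) (Cm : Fin N → Matrix (Fin p) (Fin n) ℝ)
    (Dm : Fin N → Matrix (Fin p) (Fin m) ℝ) (Pm : Fin J → Matrix (Fin N) (Fin N) ℝ)
    (Ψ : Set (ℕ → Fin J)) (p0 : Fin N → ℝ) : Prop :=
  ∃ γ : ℝ, 0 < γ ∧ γ < 1 ∧ ∀ ψ ∈ Ψ, ContractiveWith Am Bm Cm Dm Pm γ ψ p0

/-- Marginal distribution `p(k) = p(0) Π(ψ(1)) ⋯ Π(ψ(k))` of the chain. -/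
def pdist {N J : ℕ} (Pm : Fin J → Matrix (Fin N) (Fin N) ℝ) (ψ : ℕ → Fin J)
    (p0 : Fin N → ℝ) : ℕ → Fin N → ℝ
  | 0 => p0
  | k + 1 => Matrix.vecMul (pdist Pm ψ p0 k) (Pm (ψ (k + 1)))

/-- `ℒ(i,X) = A(i)ᵀ X A(i) + C(i)ᵀ C(i)`. -/
def opL {n p N : ℕ} (Am : Fin N → Matrix (Fin n) (Fin n) ℝ)
    (Cm : Fin N → Matrix (Fin p) (Fin n) ℝ) (i : Fin N) (X : Matrix (Fin n) (Fin n) ℝ) :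
    Matrix (Fin n) (Fin n) ℝ :=
  (Am i)ᵀ * X * Am i + (Cm i)ᵀ * Cm i

/-- `ℛ(i,X) = B(i)ᵀ X A(i) + D(i)ᵀ C(i)`. -/
def opR {n m p N : ℕ} (Am : Fin N → Matrix (Fin n) (Fin n) ℝ)
    (Bm : Fin N → Matrix (Fin n) (Fin m) ℝ) (Cm : Fin N → Matrix (Fin p) (Fin n) ℝ)
    (Dm : Fin N → Matrix (Fin p) (Fin m) ℝ) (i : Fin N) (X : Matrix (Fin n) (Fin n) ℝ) :
    Matrix (Fin m) (Fin n) ℝ :=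
  (Bm i)ᵀ * X * Am i + (Dm i)ᵀ * Cm i

/-- `𝒲(i,X) = I − B(i)ᵀ X B(i) − D(i)ᵀ D(i)`. -/
def opW {n m p N : ℕ} (Bm : Fin N → Matrix (Fin n) (Fin m) ℝ)
    (Dm : Fin N → Matrix (Fin p) (Fin m) ℝ) (i : Fin N) (X : Matrix (Fin n) (Fin n) ℝ) :
    Matrix (Fin m) (Fin m) ℝ :=
  1 - (Bm i)ᵀ * X * Bm i - (Dm i)ᵀ * Dm i

/-- `𝒮(i,X) = ℒ(i,X) + ℛ(i,X)ᵀ 𝒲(i,X)⁻¹ ℛ(i,X)`. -/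
def opS {n m p N : ℕ} (Am : Fin N → Matrix (Fin n) (Fin n) ℝ)
    (Bm : Fin N → Matrix (Fin n) (Fin m) ℝ) (Cm : Fin N → Matrix (Fin p) (Fin n) ℝ)
    (Dm : Fin N → Matrix (Fin p) (Fin m) ℝ) (i : Fin N) (X : Matrix (Fin n) (Fin n) ℝ) :
    Matrix (Fin n) (Fin n) ℝ :=
  opL Am Cm i X + (opR Am Bm Cm Dm i X)ᵀ * (opW Bm Dm i X)⁻¹ * opR Am Bm Cm Dm i X

/-- `ℱ(i,X) = A(i) + B(i) 𝒲(i,X)⁻¹ ℛ(i,X)`. -/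
def opF {n m p N : ℕ} (Am : Fin N → Matrix (Fin n) (Fin n) ℝ)
    (Bm : Fin N → Matrix (Fin n) (Fin m) ℝ) (Cm : Fin N → Matrix (Fin p) (Fin n) ℝ)
    (Dm : Fin N → Matrix (Fin p) (Fin m) ℝ) (i : Fin N) (X : Matrix (Fin n) (Fin n) ℝ) :
    Matrix (Fin n) (Fin n) ℝ :=
  Am i + Bm i * (opW Bm Dm i X)⁻¹ * opR Am Bm Cm Dm i X

/-- Backwards recursion for the perturbed finite-horizon Riccati difference equation,
indexed by the number `d = T + 1 − k` of remaining steps. -/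
def ricAuxE {n m p N J : ℕ} (Am : Fin N → Matrix (Fin n) (Fin n) ℝ)
    (Bm : Fin N → Matrix (Fin n) (Fin m) ℝ) (Cm : Fin N → Matrix (Fin p) (Fin n) ℝ)
    (Dm : Fin N → Matrix (Fin p) (Fin m) ℝ) (Pm : Fin J → Matrix (Fin N) (Fin N) ℝ)
    (ψ : ℕ → Fin J) (T : ℕ) (ε : ℝ) : ℕ → Fin N → Matrix (Fin n) (Fin n) ℝ
  | 0, _ => 0
  | d + 1, i =>
      opS Am Bm Cm Dm i
          (∑ j, Pm (ψ (T - d + 1)) i j • ricAuxE Am Bm Cm Dm Pm ψ T ε d j) + ε • 1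

/-- The perturbed finite-horizon Riccati solution `X_ψ(i,k,T,ε)`:
`X_ψ(i,T+1,T,ε) = 0` and `X_ψ(i,k,T,ε) = 𝒮(i, X̃_ψ(i,k+1,T,ε)) + εI` where
`X̃_ψ(i,k+1,T,ε) = Σ_j π_{ij}(ψ(k+1)) X_ψ(j,k+1,T,ε)`. -/
def ricE {n m p N J : ℕ} (Am : Fin N → Matrix (Fin n) (Fin n) ℝ)
    (Bm : Fin N → Matrix (Fin n) (Fin m) ℝ) (Cm : Fin N → Matrix (Fin p) (Fin n) ℝ)
    (Dm : Fin N → Matrix (Fin p) (Fin m) ℝ) (Pm : Fin J → Matrix (Fin N) (Fin N) ℝ)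
    (ψ : ℕ → Fin J) (i : Fin N) (k T : ℕ) (ε : ℝ) : Matrix (Fin n) (Fin n) ℝ :=
  ricAuxE Am Bm Cm Dm Pm ψ T ε (T + 1 - k) i

/-- The (unperturbed) finite-horizon Riccati solution `X_ψ(i,k,T)`. -/
def ric {n m p N J : ℕ} (Am : Fin N → Matrix (Fin n) (Fin n) ℝ)
    (Bm : Fin N → Matrix (Fin n) (Fin m) ℝ) (Cm : Fin N → Matrix (Fin p) (Fin n) ℝ)
    (Dm : Fin N → Matrix (Fin p) (Fin m) ℝ) (Pm : Fin J → Matrix (Fin N) (Fin N) ℝ)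
    (ψ : ℕ → Fin J) (i : Fin N) (k T : ℕ) : Matrix (Fin n) (Fin n) ℝ :=
  ricE Am Bm Cm Dm Pm ψ i k T 0

/-- `ℬ(i,X,Y) = [[A,B],[C,D]]ᵀ diag(X,I) [[A,B],[C,D]] − diag(Y,I)`. -/
def bigB {n m p N : ℕ} (Am : Fin N → Matrix (Fin n) (Fin n) ℝ)
    (Bm : Fin N → Matrix (Fin n) (Fin m) ℝ) (Cm : Fin N → Matrix (Fin p) (Fin n) ℝ)
    (Dm : Fin N → Matrix (Fin p) (Fin m) ℝ) (i : Fin N)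
    (X Y : Matrix (Fin n) (Fin n) ℝ) : Matrix (Fin n ⊕ Fin m) (Fin n ⊕ Fin m) ℝ :=
  (Matrix.fromBlocks (Am i) (Bm i) (Cm i) (Dm i))ᵀ *
      Matrix.fromBlocks X 0 0 (1 : Matrix (Fin p) (Fin p) ℝ) *
      Matrix.fromBlocks (Am i) (Bm i) (Cm i) (Dm i) -
    Matrix.fromBlocks Y 0 0 (1 : Matrix (Fin m) (Fin m) ℝ)

/-- The switching window `ψ_M(k) = (ψ(k+1), …, ψ(k+M))`. -/
def window {J : ℕ} (ψ : ℕ → Fin J) (M k : ℕ) : Fin M → Fin J :=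
  fun l => ψ (k + (l : ℕ) + 1)

/-- `Ψ_M`, the set of all windows of length `M` occurring in `Ψ`. -/
def windowSet {J : ℕ} (Ψ : Set (ℕ → Fin J)) (M : ℕ) : Set (Fin M → Fin J) :=
  { r | ∃ ψ ∈ Ψ, ∃ t : ℕ, r = window ψ M t }

/-- Closed-loop matrix `ℱ(i, X̃_ψ(i, l+1, T, ε))` at time `l`. -/
def Fcl {n m p N J : ℕ} (Am : Fin N → Matrix (Fin n) (Fin n) ℝ)
    (Bm : Fin N → Matrix (Fin n) (Fin m) ℝ) (Cm : Fin N → Matrix (Fin p) (Fin n) ℝ)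
    (Dm : Fin N → Matrix (Fin p) (Fin m) ℝ) (Pm : Fin J → Matrix (Fin N) (Fin N) ℝ)
    (ψ : ℕ → Fin J) (T : ℕ) (ε : ℝ) (i : Fin N) (l : ℕ) : Matrix (Fin n) (Fin n) ℝ :=
  opF Am Bm Cm Dm i (∑ j, Pm (ψ (l + 1)) i j • ricE Am Bm Cm Dm Pm ψ j (l + 1) T ε)

/-- Ordered closed-loop product `φ = F(t(d−1), j+d−1) ⋯ F(t 0, j)`. -/
def clPathProd {n N : ℕ} (F : Fin N → ℕ → Matrix (Fin n) (Fin n) ℝ) (j : ℕ) {d : ℕ}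
    (t : Fin d → Fin N) : Matrix (Fin n) (Fin n) ℝ :=
  (((List.finRange d).reverse).map fun l => F (t l) (j + (l : ℕ))).prod

/-- Closed-loop conditional second moment `H_ψ(i,j,k,T,ε)`. -/
def Hmat {n m p N J : ℕ} (Am : Fin N → Matrix (Fin n) (Fin n) ℝ)
    (Bm : Fin N → Matrix (Fin n) (Fin m) ℝ) (Cm : Fin N → Matrix (Fin p) (Fin n) ℝ)
    (Dm : Fin N → Matrix (Fin p) (Fin m) ℝ) (Pm : Fin J → Matrix (Fin N) (Fin N) ℝ)
    (ψ : ℕ → Fin J) (T : ℕ) (ε : ℝ) (i : Fin N) (j k : ℕ) :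
    Matrix (Fin n) (Fin n) ℝ :=
  if k ≤ j then 1
  else
    ∑ t : Fin (k - j - 1 + 1) → Fin N,
      (if t 0 = i then
          ∏ l : Fin (k - j - 1), Pm (ψ (j + (l : ℕ) + 1)) (t l.castSucc) (t l.succ)
        else 0) •
        ((clPathProd (Fcl Am Bm Cm Dm Pm ψ T ε) j t)ᵀ *
          clPathProd (Fcl Am Bm Cm Dm Pm ψ T ε) j t)

/-- `Y_ψ(i,k) = Σ_{j=k}^{k+M+1} E[Φ(j,k)ᵀΦ(j,k) ∣ θ(k)=i]`. -/
def Ysum {n N J : ℕ} (Am : Fin N → Matrix (Fin n) (Fin n) ℝ)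
    (Pm : Fin J → Matrix (Fin N) (Fin N) ℝ) (ψ : ℕ → Fin J) (M : ℕ) (i : Fin N)
    (k : ℕ) : Matrix (Fin n) (Fin n) ℝ :=
  ∑ j ∈ Finset.range (M + 2), Gmat Am Pm ψ i k (k + j)

/-!
Every `G_ψ(i,k,j)` is positive semidefinite and `G_ψ(i,k,k) = I`, which gives `I ≤ Y_ψ(i,k)`;
stability bounds `Y_ψ(i,k)` termwise by the geometric series `Σ c λ^j ≤ c/(1−λ)`.
Splitting off the first step of the mode path (Markov property) shows that `G_ψ(i,k,m)` is the
average of `A(i)ᵀ G_ψ(j,k+1,m) A(i)` over `j ~ π_{i·}(ψ(k+1))`, hence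
`A(i)ᵀ Ỹ_ψ(i,k+1) A(i) = Σ_{m=k+1}^{k+M+2} G_ψ(i,k,m)`, and the difference with `Y_ψ(i,k)`
telescopes to `I − G_ψ(i,k,k+M+2) ≥ (1 − c λ^{M+2}) I`.
-/

theorem Fintype.sum_fin_succ_fun {α M : Type*} [Fintype α] [AddCommMonoid M] {e : ℕ}
    (f : (Fin (e + 1) → α) → M) :
    ∑ t, f t = ∑ a, ∑ s : Fin e → α, f (Fin.cons a s) := by
  rw [← Fintype.sum_prod_type']
  exact (Fintype.sum_equiv (Fin.consEquiv fun _ => α) _ _ fun _ => rfl).symm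

theorem EMSSWith.Gmat_le {n N J : ℕ} {Am : Fin N → Matrix (Fin n) (Fin n) ℝ}
    {Pm : Fin J → Matrix (Fin N) (Fin N) ℝ} {c lam : ℝ} {ψ : ℕ → Fin J}
    (hS : EMSSWith Am Pm c lam ψ) (i : Fin N) (k d : ℕ) :
    ((c * lam ^ d) • (1 : Matrix (Fin n) (Fin n) ℝ) - Gmat Am Pm ψ i k (k + d)).PosSemidef := by
  simpa using hS i k (k + d) (Nat.le_add_right k d)

section Moments

variable {n N J : ℕ} (Am : Fin N → Matrix (Fin n) (Fin n) ℝ)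
  (Pm : Fin J → Matrix (Fin N) (Fin N) ℝ) (ψ : ℕ → Fin J)

/-- `π_{t₀t₁}(ψ(j+1)) ⋯ π_{t_{e−1}t_e}(ψ(j+e))`: the probability of the mode path `t`
given `θ(j) = t₀`. -/
def pathWeight (j : ℕ) {e : ℕ} (t : Fin (e + 1) → Fin N) : ℝ :=
  ∏ l : Fin e, Pm (ψ (j + l + 1)) (t l.castSucc) (t l.succ)

def pathGram {d : ℕ} (t : Fin d → Fin N) : Matrix (Fin n) (Fin n) ℝ :=
  (pathProd Am t)ᵀ * pathProd Am t

def Ytilde (M : ℕ) (i : Fin N) (k : ℕ) : Matrix (Fin n) (Fin n) ℝ :=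
  ∑ j, Pm (ψ k) i j • Ysum Am Pm ψ M j k

theorem pathWeight_nonneg (hPnn : ∀ (s : Fin J) (i j : Fin N), 0 ≤ Pm s i j) (j : ℕ) {e : ℕ}
    (t : Fin (e + 1) → Fin N) : 0 ≤ pathWeight Pm ψ j t :=
  Finset.prod_nonneg fun _ _ => hPnn _ _ _

theorem pathWeight_cons (j : ℕ) {e : ℕ} (a : Fin N) (s : Fin (e + 1) → Fin N) :
    pathWeight Pm ψ j (Fin.cons a s : Fin (e + 2) → Fin N) =
      Pm (ψ (j + 1)) a (s 0) * pathWeight Pm ψ (j + 1) s := by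
  rw [pathWeight, Fin.prod_univ_succ]
  congr 1
  refine Finset.prod_congr rfl fun l _ => ?_
  rw [← Fin.succ_castSucc, Fin.cons_succ, Fin.cons_succ, Fin.val_succ,
    show j + (l + 1) = j + 1 + l by omega]

theorem pathGram_posSemidef {d : ℕ} (t : Fin d → Fin N) : (pathGram Am t).PosSemidef := by
  rw [pathGram, ← conjTranspose_eq_transpose_of_trivial]
  exact posSemidef_conjTranspose_mul_self _

theorem pathGram_of_fin_zero (t : Fin 0 → Fin N) : pathGram Am t = 1 := by
  simp [pathGram, pathProd]

theorem pathGram_cons {d : ℕ} (a : Fin N) (s : Fin d → Fin N) :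
    pathGram Am (Fin.cons a s : Fin (d + 1) → Fin N) = (Am a)ᵀ * pathGram Am s * Am a := by
  have hprod : pathProd Am (Fin.cons a s : Fin (d + 1) → Fin N) = pathProd Am s * Am a := by
    simp [pathProd, List.finRange_succ, List.map_reverse, List.map_map, Function.comp_def]
  rw [pathGram, pathGram, hprod, transpose_mul, Matrix.mul_assoc, Matrix.mul_assoc,
    Matrix.mul_assoc]

theorem Gmat_self (i : Fin N) (j : ℕ) : Gmat Am Pm ψ i j j = 1 :=
  if_pos le_rfl

theorem Gmat_of_lt (i : Fin N) {j k : ℕ} (hjk : j < k) :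
    Gmat Am Pm ψ i j k =
      ∑ s : Fin (k - j - 1) → Fin N,
        pathWeight Pm ψ j (Fin.cons i s : Fin (k - j - 1 + 1) → Fin N) • pathGram Am (Fin.cons i s : Fin (k - j - 1 + 1) → Fin N) := by
  rw [Gmat, if_neg (by omega), Fintype.sum_fin_succ_fun]
  simp [ite_smul, pathWeight, pathGram]

theorem Gmat_add_succ (i : Fin N) (j e : ℕ) :
    Gmat Am Pm ψ i j (j + e + 1) =
      ∑ s : Fin e → Fin N, pathWeight Pm ψ j (Fin.cons i s : Fin (e + 1) → Fin N) •
        pathGram Am (Fin.cons i s : Fin (e + 1) → Fin N) := by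
  rw [Gmat_of_lt _ _ _ _ (by omega), show j + e + 1 - j - 1 = e by omega]

theorem Gmat_posSemidef (hPnn : ∀ (s : Fin J) (i j : Fin N), 0 ≤ Pm s i j) (i : Fin N)
    (j k : ℕ) : (Gmat Am Pm ψ i j k).PosSemidef := by
  rcases le_or_gt k j with hkj | hjk
  · rw [Gmat, if_pos hkj]
    exact .one
  · rw [Gmat_of_lt _ _ _ _ hjk]
    exact posSemidef_sum _ fun s _ =>
      (pathGram_posSemidef Am _).smul (pathWeight_nonneg Pm ψ hPnn _ _)

theorem Gmat_succ_left (hProw : ∀ (s : Fin J) (i : Fin N), ∑ j, Pm s i j = 1) (i : Fin N)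
    (j d : ℕ) :
    Gmat Am Pm ψ i j (j + 1 + d) =
      ∑ a, Pm (ψ (j + 1)) i a • ((Am i)ᵀ * Gmat Am Pm ψ a (j + 1) (j + 1 + d) * Am i) := by
  cases d with
  | zero =>
    have hone : Gmat Am Pm ψ i j (j + 1) = (Am i)ᵀ * Am i := by
      simpa [pathWeight, pathGram_cons, pathGram_of_fin_zero] using Gmat_add_succ Am Pm ψ i j 0
    simp only [add_zero, Gmat_self, Matrix.mul_one, ← Finset.sum_smul, hProw, one_smul, hone]
  | succ e =>
    rw [show j + 1 + (e + 1) = j + (e + 1) + 1 by omega, Gmat_add_succ,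
      Fintype.sum_fin_succ_fun, show j + (e + 1) + 1 = j + 1 + e + 1 by omega]
    refine Finset.sum_congr rfl fun a _ => ?_
    rw [Gmat_add_succ, Matrix.mul_sum, Matrix.sum_mul, Finset.smul_sum]
    refine Finset.sum_congr rfl fun s _ => ?_
    rw [pathWeight_cons, pathGram_cons, Fin.cons_zero, mul_smul, Matrix.mul_smul,
      Matrix.smul_mul]

theorem transpose_mul_Ytilde_mul (hProw : ∀ (s : Fin J) (i : Fin N), ∑ j, Pm s i j = 1)
    (M : ℕ) (i : Fin N) (k : ℕ) :
    (Am i)ᵀ * Ytilde Am Pm ψ M i (k + 1) * Am i =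
      ∑ d ∈ Finset.range (M + 2), Gmat Am Pm ψ i k (k + 1 + d) := by
  simp only [Ytilde, Ysum, Finset.smul_sum, Gmat_succ_left Am Pm ψ hProw]
  rw [Finset.sum_comm, Matrix.mul_sum, Matrix.sum_mul]
  refine Finset.sum_congr rfl fun d _ => ?_
  rw [Matrix.mul_sum, Matrix.sum_mul]
  simp only [Matrix.mul_smul, Matrix.smul_mul]

theorem Ysum_sub_transpose_mul_Ytilde_mul
    (hProw : ∀ (s : Fin J) (i : Fin N), ∑ j, Pm s i j = 1) (M : ℕ) (i : Fin N) (k : ℕ) :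
    Ysum Am Pm ψ M i k - (Am i)ᵀ * Ytilde Am Pm ψ M i (k + 1) * Am i =
      1 - Gmat Am Pm ψ i k (k + (M + 2)) := by
  rw [transpose_mul_Ytilde_mul Am Pm ψ hProw, Ysum,
    Finset.sum_range_succ' (fun j => Gmat Am Pm ψ i k (k + j)),
    Finset.sum_range_succ (fun d => Gmat Am Pm ψ i k (k + 1 + d)), add_zero, Gmat_self]
  simp only [← add_assoc, add_right_comm k 1]
  abel

theorem one_le_Ysum (hPnn : ∀ (s : Fin J) (i j : Fin N), 0 ≤ Pm s i j) (M : ℕ) (i : Fin N)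
    (k : ℕ) : (Ysum Am Pm ψ M i k - 1).PosSemidef := by
  rw [Ysum, Finset.sum_range_succ', add_zero, Gmat_self, add_sub_cancel_right]
  exact posSemidef_sum _ fun j _ => Gmat_posSemidef Am Pm ψ hPnn _ _ _

theorem Ysum_le {c lam : ℝ} (hc : 0 ≤ c) (hlam0 : 0 ≤ lam) (hlam1 : lam < 1)
    (hS : EMSSWith Am Pm c lam ψ) (M : ℕ) (i : Fin N) (k : ℕ) :
    ((c / (1 - lam)) • (1 : Matrix (Fin n) (Fin n) ℝ) - Ysum Am Pm ψ M i k).PosSemidef := by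
  have hgeom : ∑ j ∈ Finset.range (M + 2), c * lam ^ j ≤ c / (1 - lam) := by
    rw [← Finset.mul_sum, Finset.range_eq_Ico, div_eq_mul_one_div]
    exact mul_le_mul_of_nonneg_left
      (by simpa using geom_sum_Ico_le_of_lt_one (m := 0) (n := M + 2) hlam0 hlam1) hc
  have hsplit : (c / (1 - lam)) • (1 : Matrix (Fin n) (Fin n) ℝ) - Ysum Am Pm ψ M i k =
      ∑ j ∈ Finset.range (M + 2), ((c * lam ^ j) • 1 - Gmat Am Pm ψ i k (k + j)) +
        (c / (1 - lam) - ∑ j ∈ Finset.range (M + 2), c * lam ^ j) • 1 := by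
    rw [Finset.sum_sub_distrib, ← Finset.sum_smul, sub_smul, Ysum]
    abel
  rw [hsplit]
  exact (posSemidef_sum _ fun j _ => hS.Gmat_le i k j).add (.smul .one (sub_nonneg.2 hgeom))

theorem Ysum_lyapunov_decrease {c lam : ℝ}
    (hProw : ∀ (s : Fin J) (i : Fin N), ∑ j, Pm s i j = 1) (hS : EMSSWith Am Pm c lam ψ)
    (M : ℕ) (i : Fin N) (k : ℕ) :
    (Ysum Am Pm ψ M i k - (Am i)ᵀ * Ytilde Am Pm ψ M i (k + 1) * Am i -
      (1 - c * lam ^ (M + 2)) • 1).PosSemidef := by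
  rw [Ysum_sub_transpose_mul_Ytilde_mul Am Pm ψ hProw, sub_smul, one_smul,
    sub_sub_sub_cancel_left]
  exact hS.Gmat_le i k (M + 2)

end Moments

theorem statement2_general (n N J : ℕ) (Am : Fin N → Matrix (Fin n) (Fin n) ℝ)
    (Pm : Fin J → Matrix (Fin N) (Fin N) ℝ) (Ψ : Set (ℕ → Fin J))
    (hPnn : ∀ (s : Fin J) (i j : Fin N), 0 ≤ Pm s i j)
    (hProw : ∀ (s : Fin J) (i : Fin N), ∑ j, Pm s i j = 1)
    (c lam : ℝ) (hc : 1 ≤ c) (hlam0 : 0 ≤ lam) (hlam1 : lam < 1)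
    (hstab : ∀ ψ ∈ Ψ, EMSSWith Am Pm c lam ψ)
    (M : ℕ) :
    ∀ ψ ∈ Ψ, ∀ (i : Fin N) (k : ℕ),
      (Ysum Am Pm ψ M i k - 1).PosSemidef ∧
      ((c / (1 - lam)) • (1 : Matrix (Fin n) (Fin n) ℝ) - Ysum Am Pm ψ M i k).PosSemidef ∧
      (Ysum Am Pm ψ M i k -
        (Am i)ᵀ * (∑ j, Pm (ψ (k + 1)) i j • Ysum Am Pm ψ M j (k + 1)) * Am i -
        (1 - c * lam ^ (M + 2)) • 1).PosSemidef := by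
  intro ψ hψ i k
  exact ⟨one_le_Ysum Am Pm ψ hPnn M i k,
    Ysum_le Am Pm ψ (zero_le_one.trans hc) hlam0 hlam1 (hstab ψ hψ) M i k,
    Ysum_lyapunov_decrease Am Pm ψ hProw (hstab ψ hψ) M i k⟩

/-- (Lemma 1.) If the switched system is UEMSS with constants `c, λ` and
`M` satisfies `c λ^{M+2} < 1`, then `Y_ψ(i,k) := Σ_{j=k}^{k+M+1} G_ψ(i,k,j)` satisfies
`I ≤ Y_ψ(i,k) ≤ (c/(1−λ)) I` and
`A(i)ᵀ Ỹ_ψ(i,k+1) A(i) − Y_ψ(i,k) ≤ −(1 − c λ^{M+2}) I` for all `i` and `k`, where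
`Ỹ_ψ(i,k+1) = Σ_j π_{ij}(ψ(k+1)) Y_ψ(j,k+1)`. -/
theorem statement2 (n N J : ℕ) (Am : Fin N → Matrix (Fin n) (Fin n) ℝ)
    (Pm : Fin J → Matrix (Fin N) (Fin N) ℝ) (Ψ : Set (ℕ → Fin J)) (hΨ : Ψ.Nonempty)
    (hPnn : ∀ (s : Fin J) (i j : Fin N), 0 ≤ Pm s i j)
    (hProw : ∀ (s : Fin J) (i : Fin N), ∑ j, Pm s i j = 1)
    (c lam : ℝ) (hc : 1 ≤ c) (hlam0 : 0 ≤ lam) (hlam1 : lam < 1)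
    (hstab : ∀ ψ ∈ Ψ, EMSSWith Am Pm c lam ψ)
    (M : ℕ) (hM : c * lam ^ (M + 2) < 1) :
    ∀ ψ ∈ Ψ, ∀ (i : Fin N) (k : ℕ),
      (Ysum Am Pm ψ M i k - 1).PosSemidef ∧
      ((c / (1 - lam)) • (1 : Matrix (Fin n) (Fin n) ℝ) - Ysum Am Pm ψ M i k).PosSemidef ∧
      (Ysum Am Pm ψ M i k -
        (Am i)ᵀ * (∑ j, Pm (ψ (k + 1)) i j • Ysum Am Pm ψ M j (k + 1)) * Am i -
        (1 - c * lam ^ (M + 2)) • 1).PosSemidef :=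
  statement2_general n N J Am Pm Ψ hPnn hProw c lam hc hlam0 hlam1 hstab M

end SMJLS
end
end

section
/- Assume p_i(k) > 0 for all ψ ∈ Ψ, i ∈ 𝒩, and k ∈ ℕ₀, and assume (𝒢,Π,Ψ,p(0)) is uniformly mean square strictly contractive (so the Riccati recursion is well defined). Fix ψ ∈ Ψ, a horizon T ∈ ℕ₀, and let the initial state x(0) be a bounded random vector measurable with respect to σ(θ(0)). If the disturbance is chosen as w(k) = 𝒲(θ(k), X̃_ψ(θ(k),k+1,T))⁻¹ ℛ(θ(k), X̃_ψ(θ(k),k+1,T)) x(k) for 0 ≤ k ≤ T and w(k) = 0 for k ≥ T+1, then Σ_{k=0}^{T} E[z(k)ᵀz(k) − w(k)ᵀw(k)] = E[x(0)ᵀ X_ψ(θ(0),0,T) x(0)]. -/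
open Matrix
open scoped Classical

noncomputable section

namespace SMJLS

section AuxLemmas

/-- Quadratic-form rewriting: `(P x) ⬝ᵥ (Q x) = x ⬝ᵥ (Pᵀ Q) x`. -/
lemma dot_quad {α β : Type*} [Fintype α] [Fintype β] (P Q : Matrix α β ℝ) (x : β → ℝ) :
    (P.mulVec x) ⬝ᵥ (Q.mulVec x) = x ⬝ᵥ ((Pᵀ * Q).mulVec x) := by
  calc (P.mulVec x) ⬝ᵥ (Q.mulVec x) = (x ᵥ* Pᵀ) ⬝ᵥ (Q *ᵥ x) := by rw [Matrix.vecMul_transpose]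
    _ = x ⬝ᵥ (Pᵀ *ᵥ (Q *ᵥ x)) := (Matrix.dotProduct_mulVec _ _ _).symm
    _ = x ⬝ᵥ ((Pᵀ * Q).mulVec x) := by rw [Matrix.mulVec_mulVec]

lemma inv_key {a : Type*} [Fintype a] [DecidableEq a] {b : Type*} [Fintype b]
    (W : Matrix a a ℝ) (R : Matrix a b ℝ) :
    (W⁻¹ * R)ᵀ * (W * (W⁻¹ * R)) = (W⁻¹ * R)ᵀ * R := by
  by_cases h : IsUnit W.det
  · rw [← Matrix.mul_assoc W, Matrix.mul_nonsing_inv W h, Matrix.one_mul]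
  · rw [Matrix.nonsing_inv_apply_not_isUnit W h]; simp

set_option maxHeartbeats 1000000 in
lemma stepmat {n m p : Type*} [Fintype n] [Fintype m] [Fintype p] [DecidableEq m]
    (A : Matrix n n ℝ) (B : Matrix n m ℝ) (C : Matrix p n ℝ) (D : Matrix p m ℝ)
    (X : Matrix n n ℝ) (W : Matrix m m ℝ) (R K : Matrix m n ℝ)
    (hX : Xᵀ = X) (hW : W = 1 - Bᵀ*X*B - Dᵀ*D) (hR : R = Bᵀ*X*A + Dᵀ*C)
    (h0 : Kᵀ*(W*K) = Kᵀ*R) (hS : Rᵀ*(W⁻¹*R) = Rᵀ*K) :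
    (C + D*K)ᵀ*(C + D*K) - Kᵀ*K =
      (Aᵀ*X*A + Cᵀ*C + Rᵀ*(W⁻¹*R)) - (A + B*K)ᵀ*X*(A + B*K) := by
  have hRT : Rᵀ = Aᵀ*X*B + Cᵀ*D := by
    rw [hR]
    simp only [Matrix.transpose_add, Matrix.transpose_mul, Matrix.transpose_transpose, hX,
      Matrix.mul_assoc]
  have e1 : ((C + D*K)ᵀ*(C + D*K) - Kᵀ*K)
      - ((Aᵀ*X*A + Cᵀ*C + Rᵀ*(W⁻¹*R)) - (A + B*K)ᵀ*X*(A + B*K))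
      = (Kᵀ*R - Kᵀ*(W*K)) + (Rᵀ*K - Rᵀ*(W⁻¹*R)) := by
    simp only [Matrix.transpose_add, Matrix.transpose_mul, hX, hRT]
    rw [hW, hR]
    simp only [Matrix.add_mul, Matrix.mul_add, Matrix.sub_mul, Matrix.mul_sub]
    noncomm_ring
    simp only [Matrix.one_mul, Matrix.mul_assoc]
    abel
  rw [h0, hS, sub_self, sub_self, add_zero] at e1
  rw [hS]
  exact sub_eq_zero.mp e1

variable {n m p N J : ℕ}

lemma opW_symm (Bm : Fin N → Matrix (Fin n) (Fin m) ℝ)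
    (Dm : Fin N → Matrix (Fin p) (Fin m) ℝ) {i : Fin N} {X : Matrix (Fin n) (Fin n) ℝ}
    (hX : Xᵀ = X) : (opW Bm Dm i X)ᵀ = opW Bm Dm i X := by
  simp [opW, Matrix.transpose_sub, Matrix.transpose_mul, Matrix.transpose_one,
    Matrix.transpose_transpose, hX, Matrix.mul_assoc]

lemma opS_symm (Am : Fin N → Matrix (Fin n) (Fin n) ℝ)
    (Bm : Fin N → Matrix (Fin n) (Fin m) ℝ) (Cm : Fin N → Matrix (Fin p) (Fin n) ℝ)
    (Dm : Fin N → Matrix (Fin p) (Fin m) ℝ) {i : Fin N} {X : Matrix (Fin n) (Fin n) ℝ}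
    (hX : Xᵀ = X) : (opS Am Bm Cm Dm i X)ᵀ = opS Am Bm Cm Dm i X := by
  simp only [opS, opL, Matrix.transpose_add, Matrix.transpose_mul,
    Matrix.transpose_transpose, Matrix.transpose_nonsing_inv, opW_symm Bm Dm hX, hX,
    Matrix.mul_assoc]

lemma ricAuxE_symm (Am : Fin N → Matrix (Fin n) (Fin n) ℝ)
    (Bm : Fin N → Matrix (Fin n) (Fin m) ℝ) (Cm : Fin N → Matrix (Fin p) (Fin n) ℝ)
    (Dm : Fin N → Matrix (Fin p) (Fin m) ℝ) (Pm : Fin J → Matrix (Fin N) (Fin N) ℝ)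
    (ψ : ℕ → Fin J) (T : ℕ) (ε : ℝ) : ∀ (d : ℕ) (i : Fin N),
    (ricAuxE Am Bm Cm Dm Pm ψ T ε d i)ᵀ = ricAuxE Am Bm Cm Dm Pm ψ T ε d i := by
  intro d
  induction d with
  | zero => intro i; simp [ricAuxE]
  | succ d ih =>
    intro i
    have hX : (∑ j, Pm (ψ (T - d + 1)) i j • ricAuxE Am Bm Cm Dm Pm ψ T ε d j)ᵀ
        = ∑ j, Pm (ψ (T - d + 1)) i j • ricAuxE Am Bm Cm Dm Pm ψ T ε d j := by
      rw [Matrix.transpose_sum]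
      exact Finset.sum_congr rfl fun j _ => by rw [Matrix.transpose_smul, ih j]
    simp only [ricAuxE, Matrix.transpose_add, Matrix.transpose_smul, Matrix.transpose_one,
      opS_symm Am Bm Cm Dm hX]

lemma ric_symm (Am : Fin N → Matrix (Fin n) (Fin n) ℝ)
    (Bm : Fin N → Matrix (Fin n) (Fin m) ℝ) (Cm : Fin N → Matrix (Fin p) (Fin n) ℝ)
    (Dm : Fin N → Matrix (Fin p) (Fin m) ℝ) (Pm : Fin J → Matrix (Fin N) (Fin N) ℝ)
    (ψ : ℕ → Fin J) (i : Fin N) (k T : ℕ) :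
    (ric Am Bm Cm Dm Pm ψ i k T)ᵀ = ric Am Bm Cm Dm Pm ψ i k T :=
  ricAuxE_symm Am Bm Cm Dm Pm ψ T 0 _ i

lemma ric_rec (Am : Fin N → Matrix (Fin n) (Fin n) ℝ)
    (Bm : Fin N → Matrix (Fin n) (Fin m) ℝ) (Cm : Fin N → Matrix (Fin p) (Fin n) ℝ)
    (Dm : Fin N → Matrix (Fin p) (Fin m) ℝ) (Pm : Fin J → Matrix (Fin N) (Fin N) ℝ)
    (ψ : ℕ → Fin J) (i : Fin N) (k T : ℕ) (hk : k ≤ T) :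
    ric Am Bm Cm Dm Pm ψ i k T =
      opS Am Bm Cm Dm i (∑ j, Pm (ψ (k+1)) i j • ric Am Bm Cm Dm Pm ψ j (k+1) T) := by
  unfold ric ricE
  have h1 : T + 1 - k = (T - k) + 1 := by omega
  have h2 : T - (T - k) = k := by omega
  have h3 : T + 1 - (k + 1) = T - k := by omega
  rw [h1, h3]
  show opS Am Bm Cm Dm i
      (∑ j, Pm (ψ (T - (T - k) + 1)) i j • ricAuxE Am Bm Cm Dm Pm ψ T 0 (T - k) j)
      + (0:ℝ) • 1 = _
  rw [h2, zero_smul, add_zero]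

lemma ric_top (Am : Fin N → Matrix (Fin n) (Fin n) ℝ)
    (Bm : Fin N → Matrix (Fin n) (Fin m) ℝ) (Cm : Fin N → Matrix (Fin p) (Fin n) ℝ)
    (Dm : Fin N → Matrix (Fin p) (Fin m) ℝ) (Pm : Fin J → Matrix (Fin N) (Fin N) ℝ)
    (ψ : ℕ → Fin J) (i : Fin N) (T : ℕ) : ric Am Bm Cm Dm Pm ψ i (T+1) T = 0 := by
  unfold ric ricE
  rw [Nat.sub_self]
  rfl

lemma step_pointwise (Am : Fin N → Matrix (Fin n) (Fin n) ℝ)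
    (Bm : Fin N → Matrix (Fin n) (Fin m) ℝ) (Cm : Fin N → Matrix (Fin p) (Fin n) ℝ)
    (Dm : Fin N → Matrix (Fin p) (Fin m) ℝ) (i : Fin N) (X : Matrix (Fin n) (Fin n) ℝ)
    (hX : Xᵀ = X) (x : Fin n → ℝ) :
    ((Cm i).mulVec x + (Dm i).mulVec
        ((((opW Bm Dm i X)⁻¹) * opR Am Bm Cm Dm i X).mulVec x)) ⬝ᵥ
      ((Cm i).mulVec x + (Dm i).mulVec
        ((((opW Bm Dm i X)⁻¹) * opR Am Bm Cm Dm i X).mulVec x))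
      - ((((opW Bm Dm i X)⁻¹) * opR Am Bm Cm Dm i X).mulVec x) ⬝ᵥ
          ((((opW Bm Dm i X)⁻¹) * opR Am Bm Cm Dm i X).mulVec x)
    = x ⬝ᵥ (opS Am Bm Cm Dm i X).mulVec x
      - ((Am i).mulVec x + (Bm i).mulVec
            ((((opW Bm Dm i X)⁻¹) * opR Am Bm Cm Dm i X).mulVec x)) ⬝ᵥ
          X.mulVec ((Am i).mulVec x + (Bm i).mulVec
            ((((opW Bm Dm i X)⁻¹) * opR Am Bm Cm Dm i X).mulVec x)) := by
  set W := opW Bm Dm i X with hWdef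
  set R := opR Am Bm Cm Dm i X with hRdef
  set K : Matrix (Fin m) (Fin n) ℝ := W⁻¹ * R with hK
  have hM : (Cm i + Dm i * K)ᵀ*(Cm i + Dm i * K) - Kᵀ*K =
      ((Am i)ᵀ*X*(Am i) + (Cm i)ᵀ*(Cm i) + Rᵀ*(W⁻¹*R)) - (Am i + Bm i*K)ᵀ*X*(Am i + Bm i*K) := by
    refine stepmat (Am i) (Bm i) (Cm i) (Dm i) X W R K hX ?_ ?_ ?_ ?_
    · rw [hWdef]; rfl
    · rw [hRdef]; rfl
    · rw [hK]; exact inv_key W R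
    · rw [hK]
  have hz : (Cm i).mulVec x + (Dm i).mulVec (K.mulVec x) = (Cm i + Dm i * K).mulVec x := by
    rw [Matrix.add_mulVec, Matrix.mulVec_mulVec]
  have hx1 : (Am i).mulVec x + (Bm i).mulVec (K.mulVec x) = (Am i + Bm i * K).mulVec x := by
    rw [Matrix.add_mulVec, Matrix.mulVec_mulVec]
  have hopS : opS Am Bm Cm Dm i X = (Am i)ᵀ*X*(Am i) + (Cm i)ᵀ*(Cm i) + Rᵀ*(W⁻¹*R) := by
    show opL Am Cm i X + Rᵀ * W⁻¹ * R = _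
    rw [Matrix.mul_assoc Rᵀ W⁻¹ R, opL]
  rw [hz, hx1, dot_quad, dot_quad, Matrix.mulVec_mulVec, dot_quad, hopS,
    ← dotProduct_sub, ← dotProduct_sub, ← Matrix.sub_mulVec, ← Matrix.sub_mulVec]
  refine congrArg (fun M : Matrix (Fin n) (Fin n) ℝ => x ⬝ᵥ M.mulVec x) ?_
  rw [hM, Matrix.mul_assoc ((Am i + Bm i * K)ᵀ) X (Am i + Bm i * K)]

lemma sum_mulVec' {ι a b : Type*} [Fintype b] (s : Finset ι) (M : ι → Matrix a b ℝ)
    (v : b → ℝ) : (∑ i ∈ s, M i).mulVec v = ∑ i ∈ s, (M i).mulVec v := by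
  ext r
  simp only [Matrix.mulVec, dotProduct, Finset.sum_apply, Matrix.sum_apply, Finset.sum_mul]
  exact Finset.sum_comm

lemma dot_sum' {ι b : Type*} [Fintype b] (s : Finset ι) (f : ι → b → ℝ) (v : b → ℝ) :
    v ⬝ᵥ (∑ i ∈ s, f i) = ∑ i ∈ s, v ⬝ᵥ f i := by
  simp only [dotProduct, Finset.sum_apply, Finset.mul_sum]
  exact Finset.sum_comm

lemma pexp_congr (Pm : Fin J → Matrix (Fin N) (Fin N) ℝ) (ψ : ℕ → Fin J) (p0 : Fin N → ℝ)
    {k : ℕ} {g g' : (ℕ → Fin N) → ℝ} (h : ∀ ω, g ω = g' ω) :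
    pexp Pm ψ p0 k g = pexp Pm ψ p0 k g' := by
  unfold pexp; exact Finset.sum_congr rfl fun path _ => by rw [h]

lemma pexp_sub (Pm : Fin J → Matrix (Fin N) (Fin N) ℝ) (ψ : ℕ → Fin J) (p0 : Fin N → ℝ)
    {k : ℕ} (g g' : (ℕ → Fin N) → ℝ) :
    pexp Pm ψ p0 k (fun ω => g ω - g' ω) = pexp Pm ψ p0 k g - pexp Pm ψ p0 k g' := by
  unfold pexp; rw [← Finset.sum_sub_distrib]
  exact Finset.sum_congr rfl fun path _ => by ring

lemma pexp_zero (Pm : Fin J → Matrix (Fin N) (Fin N) ℝ) (ψ : ℕ → Fin J) (p0 : Fin N → ℝ)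
    {k : ℕ} : pexp Pm ψ p0 k (fun _ => 0) = 0 := by
  simp [pexp]

/-- The equivalence `(Fin (k+1) → Fin N) × Fin N ≃ (Fin (k+2) → Fin N)` by `snoc`. -/
def snocEquiv (N k : ℕ) : ((Fin (k+1) → Fin N) × Fin N) ≃ (Fin (k+2) → Fin N) where
  toFun qj := Fin.snoc qj.1 qj.2
  invFun path := (Fin.init path, path (Fin.last (k+1)))
  left_inv := by rintro ⟨q, j⟩; simp [Fin.init_snoc, Fin.snoc_last]
  right_inv := fun path => Fin.snoc_init_self path

lemma weight_snoc (Pm : Fin J → Matrix (Fin N) (Fin N) ℝ) (ψ : ℕ → Fin J) (p0 : Fin N → ℝ)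
    (k : ℕ) (q : Fin (k+1) → Fin N) (j : Fin N) :
    weight Pm ψ p0 (k+1) (Fin.snoc q j) =
      weight Pm ψ p0 k q * Pm (ψ (k+1)) (q (Fin.last k)) j := by
  unfold weight
  rw [Fin.prod_univ_castSucc]
  simp only [Fin.succ_castSucc, Fin.snoc_castSucc, Fin.coe_castSucc, Fin.succ_last,
    Fin.snoc_last, Fin.val_last]
  have h0 : (Fin.snoc q j : Fin (k+2) → Fin N) 0 = q 0 := by
    have : (0 : Fin (k+2)) = Fin.castSucc 0 := rfl
    rw [this, Fin.snoc_castSucc]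
  rw [h0]
  ring

lemma pexp_tower (Pm : Fin J → Matrix (Fin N) (Fin N) ℝ) (ψ : ℕ → Fin J) (p0 : Fin N → ℝ)
    (k : ℕ) (h : (ℕ → Fin N) → Fin N → ℝ)
    (hh : ∀ ω ω' j, (∀ l, l ≤ k → ω l = ω' l) → h ω j = h ω' j) :
    pexp Pm ψ p0 (k+1) (fun ω => h ω (ω (k+1))) =
      pexp Pm ψ p0 k (fun ω => ∑ j, Pm (ψ (k+1)) (ω k) j * h ω j) := by
  unfold pexp
  rw [← Fintype.sum_equiv (snocEquiv N k)
    (fun qj => weight Pm ψ p0 (k+1) (Fin.snoc qj.1 qj.2) *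
      (fun ω => h ω (ω (k+1))) (fun l => (Fin.snoc qj.1 qj.2 : Fin (k+2) → Fin N)
        ⟨min l (k+1), Nat.lt_succ_of_le (min_le_right l (k+1))⟩))
    _ (fun qj => rfl)]
  rw [Fintype.sum_prod_type]
  refine Finset.sum_congr rfl fun q _ => ?_
  rw [Finset.mul_sum]
  refine Finset.sum_congr rfl fun j _ => ?_
  rw [weight_snoc]
  have hlast : (fun l => (Fin.snoc q j : Fin (k+2) → Fin N)
      ⟨min l (k+1), Nat.lt_succ_of_le (min_le_right l (k+1))⟩) (k+1) = j := by
    have : (⟨min (k+1) (k+1), Nat.lt_succ_of_le (min_le_right (k+1) (k+1))⟩ : Fin (k+2))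
        = Fin.last (k+1) := by ext; simp
    simp only [this, Fin.snoc_last]
  have hagree : ∀ l, l ≤ k →
      (fun l => (Fin.snoc q j : Fin (k+2) → Fin N)
        ⟨min l (k+1), Nat.lt_succ_of_le (min_le_right l (k+1))⟩) l =
      (fun l => q ⟨min l k, Nat.lt_succ_of_le (min_le_right l k)⟩) l := by
    intro l hl
    have h1 : (⟨min l (k+1), Nat.lt_succ_of_le (min_le_right l (k+1))⟩ : Fin (k+2))
        = Fin.castSucc ⟨min l k, Nat.lt_succ_of_le (min_le_right l k)⟩ := by
      ext; simp [min_eq_left hl, min_eq_left (hl.trans (Nat.le_succ k))]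
    simp only [h1, Fin.snoc_castSucc]
  have hq : (⟨min k k, Nat.lt_succ_of_le (min_le_right k k)⟩ : Fin (k+1)) = Fin.last k := by
    ext; simp
  simp only [hlast]
  rw [hh _ _ j hagree, hq]
  ring

end AuxLemmas

/-- (Remark 4.) Assume `p_i(k) > 0` and uniform mean square strict
contractiveness. Fix `ψ ∈ Ψ`, a horizon `T`, and an initial state `x(0)` measurable with
respect to `σ(θ(0))`. If the disturbance is `w(k) = 𝒲(θ(k),X̃_ψ(θ(k),k+1,T))⁻¹
ℛ(θ(k),X̃_ψ(θ(k),k+1,T)) x(k)` for `0 ≤ k ≤ T` and `w(k) = 0` for `k ≥ T+1`, then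
`Σ_{k=0}^{T} E[z(k)ᵀz(k) − w(k)ᵀw(k)] = E[x(0)ᵀ X_ψ(θ(0),0,T) x(0)]`. -/
theorem statement10 (n m p N J : ℕ) (Am : Fin N → Matrix (Fin n) (Fin n) ℝ)
    (Bm : Fin N → Matrix (Fin n) (Fin m) ℝ) (Cm : Fin N → Matrix (Fin p) (Fin n) ℝ)
    (Dm : Fin N → Matrix (Fin p) (Fin m) ℝ) (Pm : Fin J → Matrix (Fin N) (Fin N) ℝ)
    (Ψ : Set (ℕ → Fin J)) (hΨ : Ψ.Nonempty)
    (hPnn : ∀ (s : Fin J) (i j : Fin N), 0 ≤ Pm s i j)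
    (hProw : ∀ (s : Fin J) (i : Fin N), ∑ j, Pm s i j = 1)
    (p0 : Fin N → ℝ) (hp0nn : ∀ i, 0 ≤ p0 i) (hp0sum : ∑ i, p0 i = 1)
    (hpos : ∀ ψ ∈ Ψ, ∀ (k : ℕ) (i : Fin N), 0 < pdist Pm ψ p0 k i)
    (hcontr : UMSSC Am Bm Cm Dm Pm Ψ p0)
    (ψ : ℕ → Fin J) (hψ : ψ ∈ Ψ) (T : ℕ)
    (x0 : (ℕ → Fin N) → Fin n → ℝ)
    (hx0 : ∀ ω ω' : ℕ → Fin N, ω 0 = ω' 0 → x0 ω = x0 ω')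
    (w : ℕ → (ℕ → Fin N) → Fin m → ℝ)
    (hw : ∀ (k : ℕ) (ω : ℕ → Fin N),
      w k ω =
        if k ≤ T then
          ((opW Bm Dm (ω k)
              (∑ j, Pm (ψ (k + 1)) (ω k) j • ric Am Bm Cm Dm Pm ψ j (k + 1) T))⁻¹ *
            opR Am Bm Cm Dm (ω k)
              (∑ j, Pm (ψ (k + 1)) (ω k) j • ric Am Bm Cm Dm Pm ψ j (k + 1) T)).mulVec
            (traj Am Bm x0 w k ω)
        else 0) :
    ∑ k ∈ Finset.range (T + 1),
        pexp Pm ψ p0 k (fun ω =>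
          errv Am Bm Cm Dm x0 w k ω ⬝ᵥ errv Am Bm Cm Dm x0 w k ω - w k ω ⬝ᵥ w k ω) =
      pexp Pm ψ p0 0 (fun ω =>
        x0 ω ⬝ᵥ (ric Am Bm Cm Dm Pm ψ (ω 0) 0 T).mulVec (x0 ω)) := by
  have hmeas : ∀ (k : ℕ) (ω ω' : ℕ → Fin N), (∀ l, l ≤ k → ω l = ω' l) →
      traj Am Bm x0 w k ω = traj Am Bm x0 w k ω' ∧ w k ω = w k ω' := by
    intro k
    induction k with
    | zero =>
      intro ω ω' hag
      have h0 := hag 0 le_rfl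
      have ht : traj Am Bm x0 w 0 ω = traj Am Bm x0 w 0 ω' := hx0 ω ω' h0
      refine ⟨ht, ?_⟩
      rw [hw 0 ω, hw 0 ω', h0, ht]
    | succ k ih =>
      intro ω ω' hag
      obtain ⟨ht, hwk⟩ := ih ω ω' (fun l hl => hag l (hl.trans (Nat.le_succ k)))
      have ht1 : traj Am Bm x0 w (k+1) ω = traj Am Bm x0 w (k+1) ω' := by
        show (Am (ω k)).mulVec (traj Am Bm x0 w k ω) + (Bm (ω k)).mulVec (w k ω)
          = (Am (ω' k)).mulVec (traj Am Bm x0 w k ω') + (Bm (ω' k)).mulVec (w k ω')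
        rw [hag k (Nat.le_succ k), ht, hwk]
      refine ⟨ht1, ?_⟩
      rw [hw (k+1) ω, hw (k+1) ω', hag (k+1) le_rfl, ht1]
  have htraj1 : ∀ (k : ℕ) (ω ω' : ℕ → Fin N), (∀ l, l ≤ k → ω l = ω' l) →
      traj Am Bm x0 w (k+1) ω = traj Am Bm x0 w (k+1) ω' := by
    intro k ω ω' hag
    obtain ⟨ht, hwk⟩ := hmeas k ω ω' hag
    show (Am (ω k)).mulVec (traj Am Bm x0 w k ω) + (Bm (ω k)).mulVec (w k ω)
      = (Am (ω' k)).mulVec (traj Am Bm x0 w k ω') + (Bm (ω' k)).mulVec (w k ω')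
    rw [hag k le_rfl, ht, hwk]
  set V : ℕ → ℝ := fun k => pexp Pm ψ p0 k (fun ω =>
    traj Am Bm x0 w k ω ⬝ᵥ (ric Am Bm Cm Dm Pm ψ (ω k) k T).mulVec (traj Am Bm x0 w k ω))
    with hV
  have hstep : ∀ k, k ≤ T →
      pexp Pm ψ p0 k (fun ω =>
          errv Am Bm Cm Dm x0 w k ω ⬝ᵥ errv Am Bm Cm Dm x0 w k ω - w k ω ⬝ᵥ w k ω)
      = V k - V (k+1) := by
    intro k hk
    have hXs : ∀ i : Fin N,
        (∑ j, Pm (ψ (k+1)) i j • ric Am Bm Cm Dm Pm ψ j (k+1) T)ᵀ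
          = ∑ j, Pm (ψ (k+1)) i j • ric Am Bm Cm Dm Pm ψ j (k+1) T := by
      intro i
      rw [Matrix.transpose_sum]
      exact Finset.sum_congr rfl fun j _ => by
        rw [Matrix.transpose_smul, ric_symm]
    have hpt : ∀ ω : ℕ → Fin N,
        errv Am Bm Cm Dm x0 w k ω ⬝ᵥ errv Am Bm Cm Dm x0 w k ω - w k ω ⬝ᵥ w k ω
        = traj Am Bm x0 w k ω ⬝ᵥ
            (ric Am Bm Cm Dm Pm ψ (ω k) k T).mulVec (traj Am Bm x0 w k ω)
          - ∑ j, Pm (ψ (k+1)) (ω k) j *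
              (traj Am Bm x0 w (k+1) ω ⬝ᵥ
                (ric Am Bm Cm Dm Pm ψ j (k+1) T).mulVec (traj Am Bm x0 w (k+1) ω)) := by
      intro ω
      have hwk : w k ω =
          (((opW Bm Dm (ω k)
              (∑ j, Pm (ψ (k + 1)) (ω k) j • ric Am Bm Cm Dm Pm ψ j (k + 1) T))⁻¹ *
            opR Am Bm Cm Dm (ω k)
              (∑ j, Pm (ψ (k + 1)) (ω k) j • ric Am Bm Cm Dm Pm ψ j (k + 1) T)).mulVec
            (traj Am Bm x0 w k ω)) := by
        rw [hw k ω, if_pos hk]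
      have h1 := step_pointwise Am Bm Cm Dm (ω k)
        (∑ j, Pm (ψ (k+1)) (ω k) j • ric Am Bm Cm Dm Pm ψ j (k+1) T) (hXs (ω k))
        (traj Am Bm x0 w k ω)
      have htr1 : traj Am Bm x0 w (k+1) ω
          = (Am (ω k)).mulVec (traj Am Bm x0 w k ω) + (Bm (ω k)).mulVec (w k ω) := rfl
      have herr : errv Am Bm Cm Dm x0 w k ω
          = (Cm (ω k)).mulVec (traj Am Bm x0 w k ω) + (Dm (ω k)).mulVec (w k ω) := rfl
      rw [herr, htr1, hwk, h1, ← ric_rec Am Bm Cm Dm Pm ψ (ω k) k T hk,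
        sum_mulVec', dot_sum']
      simp only [Matrix.smul_mulVec, dotProduct_smul, smul_eq_mul]
    rw [pexp_congr Pm ψ p0 hpt, pexp_sub]
    congr 1
    exact (pexp_tower Pm ψ p0 k (fun ω j =>
      traj Am Bm x0 w (k+1) ω ⬝ᵥ
        (ric Am Bm Cm Dm Pm ψ j (k+1) T).mulVec (traj Am Bm x0 w (k+1) ω))
      (fun ω ω' j hag => by simp only [htraj1 k ω ω' hag])).symm
  have hVtop : V (T+1) = 0 := by
    show pexp Pm ψ p0 (T+1) _ = 0
    rw [pexp_congr Pm ψ p0 (g' := fun _ => (0:ℝ)) (fun ω => by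
      rw [ric_top, Matrix.zero_mulVec, dotProduct_zero]), pexp_zero]
  have hV0 : V 0 = pexp Pm ψ p0 0 (fun ω =>
      x0 ω ⬝ᵥ (ric Am Bm Cm Dm Pm ψ (ω 0) 0 T).mulVec (x0 ω)) := rfl
  calc ∑ k ∈ Finset.range (T + 1),
      pexp Pm ψ p0 k (fun ω =>
        errv Am Bm Cm Dm x0 w k ω ⬝ᵥ errv Am Bm Cm Dm x0 w k ω - w k ω ⬝ᵥ w k ω)
      = ∑ k ∈ Finset.range (T + 1), (V k - V (k+1)) :=
        Finset.sum_congr rfl fun k hk =>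
          hstep k (Nat.lt_succ_iff.mp (Finset.mem_range.mp hk))
    _ = V 0 - V (T+1) := Finset.sum_range_sub' V (T+1)
    _ = V 0 := by rw [hVtop, sub_zero]
    _ = _ := hV0

end SMJLS
end
end
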